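/- Let f : R → R be analytic and T : R → R be analytic with T'(x₀) ≠ 0 and T invertible near x₀. Define the conservative predictor–corrector step: x̃ = x₀ + τ f(x₀), ξ(τ) = T(x₀) + (τ/2)[T'(x₀)f(x₀) + T'(x̃)f(x̃)], and x(τ) = T^{-1}(ξ(τ)). Then as τ → 0, x(τ) = x₀ + τ f(x₀) + (τ²/2) f'(x₀) f(x₀) + (τ³/4)[f''(x₀) f(x₀)² + (T'''(x₀)/(3T'(x₀))) f(x₀)³] + O(τ⁴). -/

import Mathlib

open Asymptotics Filter Finset

lemma taylorO {g : ℝ → ℝ} {x : ℝ} (hg : AnalyticAt ℝ g x) (n : ℕ) :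
    (fun s : ℝ => g (x + s) - ∑ k ∈ Finset.range n,
      iteratedDeriv k g x / (k.factorial : ℝ) * s ^ k) =O[nhds 0] fun s => s ^ n := by
  obtain ⟨p, hp⟩ := hg
  have h1 := hp.isBigO_sub_partialSum_pow n
  have hc : ∀ k, iteratedDeriv k g x = (k.factorial : ℝ) * p.coeff k := by
    intro k
    obtain ⟨r, hball⟩ := hp
    have h2 := hball.factorial_smul (1 : ℝ) k
    rw [FormalMultilinearSeries.apply_eq_pow_smul_coeff] at h2
    simp only [one_pow, one_smul, smul_eq_mul, nsmul_eq_mul] at h2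
    rw [iteratedDeriv_eq_iteratedFDeriv, ← h2]; ring
  have heq : ∀ s : ℝ, p.partialSum n s = ∑ k ∈ Finset.range n,
      iteratedDeriv k g x / (k.factorial : ℝ) * s ^ k := by
    intro s
    rw [FormalMultilinearSeries.partialSum]
    refine Finset.sum_congr rfl fun k _ => ?_
    rw [FormalMultilinearSeries.apply_eq_pow_smul_coeff, hc k, smul_eq_mul]
    field_simp
  have h3 : (fun s : ℝ => g (x + s) - ∑ k ∈ Finset.range n,
      iteratedDeriv k g x / (k.factorial : ℝ) * s ^ k) =O[nhds 0] fun s : ℝ => ‖s‖ ^ n := by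
    refine h1.congr_left fun s => ?_
    rw [heq]
  exact h3.trans (isBigO_of_le _ fun s => by simp [abs_pow])

set_option maxHeartbeats 2000000 in
open Asymptotics Filter in
/-- Local error expansion of the conservative predictor–corrector scheme:
`x(τ) = x₀ + τf + (τ²/2)f'f + (τ³/4)[f''f² + (T'''/(3T'))f³] + O(τ⁴)`. -/
theorem stmt_13 (f T Tinv : ℝ → ℝ) (x₀ : ℝ)
    (hf : AnalyticAt ℝ f x₀) (hT : AnalyticAt ℝ T x₀)
    (hT' : deriv T x₀ ≠ 0)
    (hleft : ∀ᶠ y in nhds x₀, Tinv (T y) = y)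
    (hright : ∀ᶠ z in nhds (T x₀), T (Tinv z) = z)
    (hTinv : AnalyticAt ℝ Tinv (T x₀)) :
    (fun τ : ℝ =>
      Tinv (T x₀ + τ / 2 * (deriv T x₀ * f x₀
          + deriv T (x₀ + τ * f x₀) * f (x₀ + τ * f x₀)))
      - (x₀ + τ * f x₀ + τ ^ 2 / 2 * (deriv f x₀ * f x₀)
          + τ ^ 3 / 4 * (iteratedDeriv 2 f x₀ * (f x₀) ^ 2
              + iteratedDeriv 3 T x₀ / (3 * deriv T x₀) * (f x₀) ^ 3)))
      =O[nhds 0] fun τ => τ ^ 4 := by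
  obtain ⟨U, hU, hTU⟩ := hT.exists_mem_nhds_analyticOnNhd
  have hdT : AnalyticAt ℝ (deriv T) x₀ := hTU.deriv x₀ (mem_of_mem_nhds hU)
  have htl : Tendsto (fun τ : ℝ => τ * f x₀) (nhds 0) (nhds 0) := by
    simpa using (tendsto_id.mul_const (f x₀) :
      Tendsto (fun τ : ℝ => τ * f x₀) (nhds 0) (nhds (0 * f x₀)))
  have hx0 : Tendsto (fun τ : ℝ => x₀ + τ * f x₀) (nhds 0) (nhds x₀) := by
    simpa using (tendsto_const_nhds.add htl :
      Tendsto (fun τ : ℝ => x₀ + τ * f x₀) (nhds 0) (nhds (x₀ + 0)))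
  have hfc : Tendsto (fun τ : ℝ => f (x₀ + τ * f x₀)) (nhds 0) (nhds (f x₀)) :=
    (hf.continuousAt.tendsto).comp hx0
  have hdTc : Tendsto (fun τ : ℝ => deriv T (x₀ + τ * f x₀)) (nhds 0) (nhds (deriv T x₀)) :=
    (hdT.continuousAt.tendsto).comp hx0
  have hsf0 : Tendsto (fun τ : ℝ => (τ * f x₀ + τ ^ 2 / 2 * (deriv f x₀ * f x₀) + τ ^ 3 / 4 * (iteratedDeriv 2 f x₀ * (f x₀) ^ 2 + iteratedDeriv 3 T x₀ / (3 * deriv T x₀) * (f x₀) ^ 3))) (nhds 0) (nhds 0) := by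
    have hcont : Continuous (fun τ : ℝ => (τ * f x₀ + τ ^ 2 / 2 * (deriv f x₀ * f x₀) + τ ^ 3 / 4 * (iteratedDeriv 2 f x₀ * (f x₀) ^ 2 + iteratedDeriv 3 T x₀ / (3 * deriv T x₀) * (f x₀) ^ 3))) := by fun_prop
    exact hcont.tendsto' 0 0 (by norm_num)
  have hpf0 : Tendsto (fun τ : ℝ => (x₀ + τ * f x₀ + τ ^ 2 / 2 * (deriv f x₀ * f x₀) + τ ^ 3 / 4 * (iteratedDeriv 2 f x₀ * (f x₀) ^ 2 + iteratedDeriv 3 T x₀ / (3 * deriv T x₀) * (f x₀) ^ 3))) (nhds 0) (nhds x₀) := by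
    have hcont : Continuous (fun τ : ℝ => (x₀ + τ * f x₀ + τ ^ 2 / 2 * (deriv f x₀ * f x₀) + τ ^ 3 / 4 * (iteratedDeriv 2 f x₀ * (f x₀) ^ 2 + iteratedDeriv 3 T x₀ / (3 * deriv T x₀) * (f x₀) ^ 3))) := by fun_prop
    exact hcont.tendsto' 0 x₀ (by norm_num)
  have hTpf0 : Tendsto (fun τ : ℝ => T (x₀ + τ * f x₀ + τ ^ 2 / 2 * (deriv f x₀ * f x₀) + τ ^ 3 / 4 * (iteratedDeriv 2 f x₀ * (f x₀) ^ 2 + iteratedDeriv 3 T x₀ / (3 * deriv T x₀) * (f x₀) ^ 3))) (nhds 0) (nhds (T x₀)) :=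
    (hT.continuousAt.tendsto).comp hpf0
  have hxi0 : Tendsto (fun τ : ℝ => (T x₀ + τ / 2 * (deriv T x₀ * f x₀ + deriv T (x₀ + τ * f x₀) * f (x₀ + τ * f x₀)))) (nhds 0) (nhds (T x₀)) := by
    have h : Tendsto (fun τ : ℝ => T x₀ + τ / 2 * (deriv T x₀ * f x₀ + deriv T (x₀ + τ * f x₀) * f (x₀ + τ * f x₀))) (nhds 0) (nhds (T x₀ + 0 / 2 * (deriv T x₀ * f x₀ + deriv T x₀ * f x₀))) :=
      tendsto_const_nhds.add ((tendsto_id.div_const (2:ℝ)).mul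
        (tendsto_const_nhds.add (hdTc.mul hfc)))
    simpa using h
  have hE1 : (fun τ : ℝ => (f (x₀ + τ * f x₀) - (f x₀ + deriv f x₀ * (τ * f x₀) + iteratedDeriv 2 f x₀ / 2 * (τ * f x₀) ^ 2))) =O[nhds 0] fun τ => τ ^ 3 := by
    have h := (taylorO hf 3).comp_tendsto htl
    have h2 : (fun τ : ℝ => (f (x₀ + τ * f x₀) - (f x₀ + deriv f x₀ * (τ * f x₀) + iteratedDeriv 2 f x₀ / 2 * (τ * f x₀) ^ 2))) =O[nhds 0] fun τ : ℝ => (τ * f x₀) ^ 3 := by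
      refine h.congr_left fun τ => ?_
      simp only [Function.comp_apply, Finset.sum_range_succ, Finset.sum_range_zero,
        iteratedDeriv_zero, iteratedDeriv_one, Nat.factorial]
      push_cast
      ring
    refine h2.trans ?_
    refine ((isBigO_refl (fun τ : ℝ => τ ^ 3) (nhds 0)).const_mul_left ((f x₀) ^ 3)).congr_left
      fun τ => by ring
  have hE2 : (fun τ : ℝ => (deriv T (x₀ + τ * f x₀) - (deriv T x₀ + iteratedDeriv 2 T x₀ * (τ * f x₀) + iteratedDeriv 3 T x₀ / 2 * (τ * f x₀) ^ 2))) =O[nhds 0] fun τ => τ ^ 3 := by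
    have hd2 : deriv (deriv T) = iteratedDeriv 2 T := by
      rw [iteratedDeriv_succ', iteratedDeriv_one]
    have hd3 : iteratedDeriv 2 (deriv T) = iteratedDeriv 3 T := (iteratedDeriv_succ' ..).symm
    have h := (taylorO hdT 3).comp_tendsto htl
    have h2 : (fun τ : ℝ => (deriv T (x₀ + τ * f x₀) - (deriv T x₀ + iteratedDeriv 2 T x₀ * (τ * f x₀) + iteratedDeriv 3 T x₀ / 2 * (τ * f x₀) ^ 2))) =O[nhds 0] fun τ : ℝ => (τ * f x₀) ^ 3 := by
      refine h.congr_left fun τ => ?_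
      simp only [Function.comp_apply, Finset.sum_range_succ, Finset.sum_range_zero,
        iteratedDeriv_zero, iteratedDeriv_one, hd2, hd3, Nat.factorial]
      push_cast
      ring
    refine h2.trans ?_
    refine ((isBigO_refl (fun τ : ℝ => τ ^ 3) (nhds 0)).const_mul_left ((f x₀) ^ 3)).congr_left
      fun τ => by ring
  have hE3 : (fun τ : ℝ => (T (x₀ + τ * f x₀ + τ ^ 2 / 2 * (deriv f x₀ * f x₀) + τ ^ 3 / 4 * (iteratedDeriv 2 f x₀ * (f x₀) ^ 2 + iteratedDeriv 3 T x₀ / (3 * deriv T x₀) * (f x₀) ^ 3)) - (T x₀ + deriv T x₀ * (τ * f x₀ + τ ^ 2 / 2 * (deriv f x₀ * f x₀) + τ ^ 3 / 4 * (iteratedDeriv 2 f x₀ * (f x₀) ^ 2 + iteratedDeriv 3 T x₀ / (3 * deriv T x₀) * (f x₀) ^ 3)) + iteratedDeriv 2 T x₀ / 2 * (τ * f x₀ + τ ^ 2 / 2 * (deriv f x₀ * f x₀) + τ ^ 3 / 4 * (iteratedDeriv 2 f x₀ * (f x₀) ^ 2 + iteratedDeriv 3 T x₀ / (3 * deriv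 T x₀) * (f x₀) ^ 3)) ^ 2 + iteratedDeriv 3 T x₀ / 6 * (τ * f x₀ + τ ^ 2 / 2 * (deriv f x₀ * f x₀) + τ ^ 3 / 4 * (iteratedDeriv 2 f x₀ * (f x₀) ^ 2 + iteratedDeriv 3 T x₀ / (3 * deriv T x₀) * (f x₀) ^ 3)) ^ 3))) =O[nhds 0] fun τ => τ ^ 4 := by
    have h := (taylorO hT 4).comp_tendsto hsf0
    have h2 : (fun τ : ℝ => (T (x₀ + τ * f x₀ + τ ^ 2 / 2 * (deriv f x₀ * f x₀) + τ ^ 3 / 4 * (iteratedDeriv 2 f x₀ * (f x₀) ^ 2 + iteratedDeriv 3 T x₀ / (3 * deriv T x₀) * (f x₀) ^ 3)) - (T x₀ + deriv T x₀ * (τ * f x₀ + τ ^ 2 / 2 * (deriv f x₀ * f x₀) + τ ^ 3 / 4 * (iteratedDeriv 2 f x₀ * (f x₀) ^ 2 + iteratedDeriv 3 T x₀ / (3 * deriv T x₀) * (f x₀) ^ 3)) + iteratedDeriv 2 T x₀ / 2 * (τ * f x₀ + τ ^ 2 / 2 * (deriv f x₀ * f x₀) + τ ^ 3 / 4 * (iteratedDeriv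 2 f x₀ * (f x₀) ^ 2 + iteratedDeriv 3 T x₀ / (3 * deriv T x₀) * (f x₀) ^ 3)) ^ 2 + iteratedDeriv 3 T x₀ / 6 * (τ * f x₀ + τ ^ 2 / 2 * (deriv f x₀ * f x₀) + τ ^ 3 / 4 * (iteratedDeriv 2 f x₀ * (f x₀) ^ 2 + iteratedDeriv 3 T x₀ / (3 * deriv T x₀) * (f x₀) ^ 3)) ^ 3))) =O[nhds 0] fun τ : ℝ => ((τ * f x₀ + τ ^ 2 / 2 * (deriv f x₀ * f x₀) + τ ^ 3 / 4 * (iteratedDeriv 2 f x₀ * (f x₀) ^ 2 + iteratedDeriv 3 T x₀ / (3 * deriv T x₀) * (f x₀) ^ 3))) ^ 4 := by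
      refine h.congr_left fun τ => ?_
      simp only [Function.comp_apply, Finset.sum_range_succ, Finset.sum_range_zero,
        iteratedDeriv_zero, iteratedDeriv_one, Nat.factorial]
      rw [show x₀ + (τ * f x₀ + τ ^ 2 / 2 * (deriv f x₀ * f x₀) + τ ^ 3 / 4 * (iteratedDeriv 2 f x₀ * (f x₀) ^ 2 + iteratedDeriv 3 T x₀ / (3 * deriv T x₀) * (f x₀) ^ 3)) = (x₀ + τ * f x₀ + τ ^ 2 / 2 * (deriv f x₀ * f x₀) + τ ^ 3 / 4 * (iteratedDeriv 2 f x₀ * (f x₀) ^ 2 + iteratedDeriv 3 T x₀ / (3 * deriv T x₀) * (f x₀) ^ 3)) by ring]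
      push_cast
      ring
    refine h2.trans ?_
    have hq : Continuous (fun τ : ℝ => (f x₀ + τ / 2 * (deriv f x₀ * f x₀) + τ ^ 2 / 4 * (iteratedDeriv 2 f x₀ * (f x₀) ^ 2 + iteratedDeriv 3 T x₀ / (3 * deriv T x₀) * (f x₀) ^ 3)) ^ 4) := by
      fun_prop
    have h3 := (isBigO_refl (fun τ : ℝ => τ ^ 4) (nhds 0)).mul
      ((hq.tendsto 0).isBigO_one (F := ℝ))
    refine (h3.congr_left fun τ => by ring).congr_right fun τ => by ring
  have key : ∀ τ : ℝ, (T x₀ + τ / 2 * (deriv T x₀ * f x₀ + deriv T (x₀ + τ * f x₀) * f (x₀ + τ * f x₀))) - T (x₀ + τ * f x₀ + τ ^ 2 / 2 * (deriv f x₀ * f x₀) + τ ^ 3 / 4 * (iteratedDeriv 2 f x₀ * (f x₀) ^ 2 + iteratedDeriv 3 T x₀ / (3 * deriv T x₀) * (f x₀) ^ 3)) =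
      τ / 2 * ((deriv T x₀ + iteratedDeriv 2 T x₀ * (τ * f x₀) + iteratedDeriv 3 T x₀ / 2 * (τ * f x₀) ^ 2) * (f (x₀ + τ * f x₀) - (f x₀ + deriv f x₀ * (τ * f x₀) + iteratedDeriv 2 f x₀ / 2 * (τ * f x₀) ^ 2)) + (deriv T (x₀ + τ * f x₀) - (deriv T x₀ + iteratedDeriv 2 T x₀ * (τ * f x₀) + iteratedDeriv 3 T x₀ / 2 * (τ * f x₀) ^ 2)) * f (x₀ + τ * f x₀)) - (T (x₀ + τ * f x₀ + τ ^ 2 / 2 * (deriv f x₀ * f x₀) + τ ^ 3 / 4 * (iteratedDeriv 2 f x₀ * (f x₀) ^ 2 + iteratedDeriv 3 T x₀ / (3 * deriv T x₀) * (f x₀) ^ 3)) - (T x₀ + deriv T x₀ * (τ * f x₀ + τ ^ 2 / 2 * (deriv f x₀ * f x₀) + τ ^ 3 / 4 * (iteratedDeriv 2 f x₀ * (f x₀) ^ 2 + iteratedDeriv 3 T x₀ / (3 * deriv T x₀) * (f x₀) ^ 3)) + iteratedDeriv 2 T x₀ / 2 * (τ * f x₀ + τ ^ 2 / 2 * (deriv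 f x₀ * f x₀) + τ ^ 3 / 4 * (iteratedDeriv 2 f x₀ * (f x₀) ^ 2 + iteratedDeriv 3 T x₀ / (3 * deriv T x₀) * (f x₀) ^ 3)) ^ 2 + iteratedDeriv 3 T x₀ / 6 * (τ * f x₀ + τ ^ 2 / 2 * (deriv f x₀ * f x₀) + τ ^ 3 / 4 * (iteratedDeriv 2 f x₀ * (f x₀) ^ 2 + iteratedDeriv 3 T x₀ / (3 * deriv T x₀) * (f x₀) ^ 3)) ^ 3)) + τ ^ 4 * ((-1/12:ℝ)*(f x₀)^4*(iteratedDeriv 2 T x₀)*(iteratedDeriv 3 T x₀)*(deriv T x₀)⁻¹ + (-1/8:ℝ)*(f x₀)^2*(deriv f x₀)^2*(iteratedDeriv 2 T x₀) + (-1/8:ℝ)*(f x₀)^3*(deriv f x₀)*(iteratedDeriv 2 f x₀)*(iteratedDeriv 2 T x₀)*τ + (-1/24:ℝ)*(f x₀)^4*(deriv f x₀)*(iteratedDeriv 2 T x₀)*(iteratedDeriv 3 T x₀)*(deriv T x₀)⁻¹*τ + (-1/24:ℝ)*(f x₀)^5*(iteratedDeriv 3 T x₀)^2*(deriv T x₀)⁻¹*τ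 + (-1/8:ℝ)*(f x₀)^3*(deriv f x₀)^2*(iteratedDeriv 3 T x₀)*τ + (-1/32:ℝ)*(f x₀)^4*(iteratedDeriv 2 f x₀)^2*(iteratedDeriv 2 T x₀)*τ^2 + (-1/48:ℝ)*(f x₀)^5*(iteratedDeriv 2 f x₀)*(iteratedDeriv 2 T x₀)*(iteratedDeriv 3 T x₀)*(deriv T x₀)⁻¹*τ^2 + (-1/288:ℝ)*(f x₀)^6*(iteratedDeriv 2 T x₀)*(iteratedDeriv 3 T x₀)^2*(deriv T x₀)⁻¹^2*τ^2 + (-1/8:ℝ)*(f x₀)^4*(deriv f x₀)*(iteratedDeriv 2 f x₀)*(iteratedDeriv 3 T x₀)*τ^2 + (-1/24:ℝ)*(f x₀)^5*(deriv f x₀)*(iteratedDeriv 3 T x₀)^2*(deriv T x₀)⁻¹*τ^2 + (-1/48:ℝ)*(f x₀)^3*(deriv f x₀)^3*(iteratedDeriv 3 T x₀)*τ^2 + (-1/32:ℝ)*(f x₀)^5*(iteratedDeriv 2 f x₀)^2*(iteratedDeriv 3 T x₀)*τ^3 + (-1/48:ℝ)*(f x₀)^6*(iteratedDeriv 2 f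 x₀)*(iteratedDeriv 3 T x₀)^2*(deriv T x₀)⁻¹*τ^3 + (-1/288:ℝ)*(f x₀)^7*(iteratedDeriv 3 T x₀)^3*(deriv T x₀)⁻¹^2*τ^3 + (-1/32:ℝ)*(f x₀)^4*(deriv f x₀)^2*(iteratedDeriv 2 f x₀)*(iteratedDeriv 3 T x₀)*τ^3 + (-1/96:ℝ)*(f x₀)^5*(deriv f x₀)^2*(iteratedDeriv 3 T x₀)^2*(deriv T x₀)⁻¹*τ^3 + (-1/64:ℝ)*(f x₀)^5*(deriv f x₀)*(iteratedDeriv 2 f x₀)^2*(iteratedDeriv 3 T x₀)*τ^4 + (-1/96:ℝ)*(f x₀)^6*(deriv f x₀)*(iteratedDeriv 2 f x₀)*(iteratedDeriv 3 T x₀)^2*(deriv T x₀)⁻¹*τ^4 + (-1/576:ℝ)*(f x₀)^7*(deriv f x₀)*(iteratedDeriv 3 T x₀)^3*(deriv T x₀)⁻¹^2*τ^4 + (-1/384:ℝ)*(f x₀)^6*(iteratedDeriv 2 f x₀)^3*(iteratedDeriv 3 T x₀)*τ^5 + (-1/384:ℝ)*(f x₀)^7*(iteratedDeriv 2 f x₀)^2*(iteratedDeriv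 3 T x₀)^2*(deriv T x₀)⁻¹*τ^5 + (-1/1152:ℝ)*(f x₀)^8*(iteratedDeriv 2 f x₀)*(iteratedDeriv 3 T x₀)^3*(deriv T x₀)⁻¹^2*τ^5 + (-1/10368:ℝ)*(f x₀)^9*(iteratedDeriv 3 T x₀)^4*(deriv T x₀)⁻¹^3*τ^5) := by
    intro τ
    field_simp
    ring
  have hC : (fun τ : ℝ => (T x₀ + τ / 2 * (deriv T x₀ * f x₀ + deriv T (x₀ + τ * f x₀) * f (x₀ + τ * f x₀))) - T (x₀ + τ * f x₀ + τ ^ 2 / 2 * (deriv f x₀ * f x₀) + τ ^ 3 / 4 * (iteratedDeriv 2 f x₀ * (f x₀) ^ 2 + iteratedDeriv 3 T x₀ / (3 * deriv T x₀) * (f x₀) ^ 3))) =O[nhds 0] fun τ => τ ^ 4 := by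
    have hu1 : (fun τ : ℝ => τ / 2 * ((deriv T x₀ + iteratedDeriv 2 T x₀ * (τ * f x₀) + iteratedDeriv 3 T x₀ / 2 * (τ * f x₀) ^ 2) * (f (x₀ + τ * f x₀) - (f x₀ + deriv f x₀ * (τ * f x₀) + iteratedDeriv 2 f x₀ / 2 * (τ * f x₀) ^ 2)))) =O[nhds 0] fun τ => τ ^ 4 := by
      have hP2c : Continuous (fun τ : ℝ => (deriv T x₀ + iteratedDeriv 2 T x₀ * (τ * f x₀) + iteratedDeriv 3 T x₀ / 2 * (τ * f x₀) ^ 2) / 2) := by fun_prop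
      have h := ((isBigO_refl (fun τ : ℝ => τ) (nhds 0)).mul
        ((hP2c.tendsto 0).isBigO_one (F := ℝ))).mul hE1
      refine (h.congr_left fun τ => by ring).congr_right fun τ => by ring
    have hu2 : (fun τ : ℝ => τ / 2 * ((deriv T (x₀ + τ * f x₀) - (deriv T x₀ + iteratedDeriv 2 T x₀ * (τ * f x₀) + iteratedDeriv 3 T x₀ / 2 * (τ * f x₀) ^ 2)) * f (x₀ + τ * f x₀))) =O[nhds 0] fun τ => τ ^ 4 := by
      have h := (((isBigO_refl (fun τ : ℝ => τ) (nhds 0)).mul hE2).mul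
        (hfc.isBigO_one (F := ℝ))).const_mul_left (1/2)
      refine (h.congr_left fun τ => by ring).congr_right fun τ => by ring
    have hu4 : (fun τ : ℝ => τ ^ 4 * ((-1/12:ℝ)*(f x₀)^4*(iteratedDeriv 2 T x₀)*(iteratedDeriv 3 T x₀)*(deriv T x₀)⁻¹ + (-1/8:ℝ)*(f x₀)^2*(deriv f x₀)^2*(iteratedDeriv 2 T x₀) + (-1/8:ℝ)*(f x₀)^3*(deriv f x₀)*(iteratedDeriv 2 f x₀)*(iteratedDeriv 2 T x₀)*τ + (-1/24:ℝ)*(f x₀)^4*(deriv f x₀)*(iteratedDeriv 2 T x₀)*(iteratedDeriv 3 T x₀)*(deriv T x₀)⁻¹*τ + (-1/24:ℝ)*(f x₀)^5*(iteratedDeriv 3 T x₀)^2*(deriv T x₀)⁻¹*τ + (-1/8:ℝ)*(f x₀)^3*(deriv f x₀)^2*(iteratedDeriv 3 T x₀)*τ + (-1/32:ℝ)*(f x₀)^4*(iteratedDeriv 2 f x₀)^2*(iteratedDeriv 2 T x₀)*τ^2 + (-1/48:ℝ)*(f x₀)^5*(iteratedDeriv 2 f x₀)*(iteratedDeriv 2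 T x₀)*(iteratedDeriv 3 T x₀)*(deriv T x₀)⁻¹*τ^2 + (-1/288:ℝ)*(f x₀)^6*(iteratedDeriv 2 T x₀)*(iteratedDeriv 3 T x₀)^2*(deriv T x₀)⁻¹^2*τ^2 + (-1/8:ℝ)*(f x₀)^4*(deriv f x₀)*(iteratedDeriv 2 f x₀)*(iteratedDeriv 3 T x₀)*τ^2 + (-1/24:ℝ)*(f x₀)^5*(deriv f x₀)*(iteratedDeriv 3 T x₀)^2*(deriv T x₀)⁻¹*τ^2 + (-1/48:ℝ)*(f x₀)^3*(deriv f x₀)^3*(iteratedDeriv 3 T x₀)*τ^2 + (-1/32:ℝ)*(f x₀)^5*(iteratedDeriv 2 f x₀)^2*(iteratedDeriv 3 T x₀)*τ^3 + (-1/48:ℝ)*(f x₀)^6*(iteratedDeriv 2 f x₀)*(iteratedDeriv 3 T x₀)^2*(deriv T x₀)⁻¹*τ^3 + (-1/288:ℝ)*(f x₀)^7*(iteratedDeriv 3 T x₀)^3*(deriv T x₀)⁻¹^2*τ^3 + (-1/32:ℝ)*(f x₀)^4*(deriv f x₀)^2*(iteratedDeriv 2 f x₀)*(iteratedDeriv 3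 T x₀)*τ^3 + (-1/96:ℝ)*(f x₀)^5*(deriv f x₀)^2*(iteratedDeriv 3 T x₀)^2*(deriv T x₀)⁻¹*τ^3 + (-1/64:ℝ)*(f x₀)^5*(deriv f x₀)*(iteratedDeriv 2 f x₀)^2*(iteratedDeriv 3 T x₀)*τ^4 + (-1/96:ℝ)*(f x₀)^6*(deriv f x₀)*(iteratedDeriv 2 f x₀)*(iteratedDeriv 3 T x₀)^2*(deriv T x₀)⁻¹*τ^4 + (-1/576:ℝ)*(f x₀)^7*(deriv f x₀)*(iteratedDeriv 3 T x₀)^3*(deriv T x₀)⁻¹^2*τ^4 + (-1/384:ℝ)*(f x₀)^6*(iteratedDeriv 2 f x₀)^3*(iteratedDeriv 3 T x₀)*τ^5 + (-1/384:ℝ)*(f x₀)^7*(iteratedDeriv 2 f x₀)^2*(iteratedDeriv 3 T x₀)^2*(deriv T x₀)⁻¹*τ^5 + (-1/1152:ℝ)*(f x₀)^8*(iteratedDeriv 2 f x₀)*(iteratedDeriv 3 T x₀)^3*(deriv T x₀)⁻¹^2*τ^5 + (-1/10368:ℝ)*(f x₀)^9*(iteratedDeriv 3 T x₀)^4*(deriv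 T x₀)⁻¹^3*τ^5)) =O[nhds 0] fun τ => τ ^ 4 := by
      have hQc : Continuous (fun τ : ℝ => ((-1/12:ℝ)*(f x₀)^4*(iteratedDeriv 2 T x₀)*(iteratedDeriv 3 T x₀)*(deriv T x₀)⁻¹ + (-1/8:ℝ)*(f x₀)^2*(deriv f x₀)^2*(iteratedDeriv 2 T x₀) + (-1/8:ℝ)*(f x₀)^3*(deriv f x₀)*(iteratedDeriv 2 f x₀)*(iteratedDeriv 2 T x₀)*τ + (-1/24:ℝ)*(f x₀)^4*(deriv f x₀)*(iteratedDeriv 2 T x₀)*(iteratedDeriv 3 T x₀)*(deriv T x₀)⁻¹*τ + (-1/24:ℝ)*(f x₀)^5*(iteratedDeriv 3 T x₀)^2*(deriv T x₀)⁻¹*τ + (-1/8:ℝ)*(f x₀)^3*(deriv f x₀)^2*(iteratedDeriv 3 T x₀)*τ + (-1/32:ℝ)*(f x₀)^4*(iteratedDeriv 2 f x₀)^2*(iteratedDeriv 2 T x₀)*τ^2 + (-1/48:ℝ)*(f x₀)^5*(iteratedDeriv 2 f x₀)*(iteratedDeriv 2 T x₀)*(iteratedDeriv 3 T x₀)*(deriv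 T x₀)⁻¹*τ^2 + (-1/288:ℝ)*(f x₀)^6*(iteratedDeriv 2 T x₀)*(iteratedDeriv 3 T x₀)^2*(deriv T x₀)⁻¹^2*τ^2 + (-1/8:ℝ)*(f x₀)^4*(deriv f x₀)*(iteratedDeriv 2 f x₀)*(iteratedDeriv 3 T x₀)*τ^2 + (-1/24:ℝ)*(f x₀)^5*(deriv f x₀)*(iteratedDeriv 3 T x₀)^2*(deriv T x₀)⁻¹*τ^2 + (-1/48:ℝ)*(f x₀)^3*(deriv f x₀)^3*(iteratedDeriv 3 T x₀)*τ^2 + (-1/32:ℝ)*(f x₀)^5*(iteratedDeriv 2 f x₀)^2*(iteratedDeriv 3 T x₀)*τ^3 + (-1/48:ℝ)*(f x₀)^6*(iteratedDeriv 2 f x₀)*(iteratedDeriv 3 T x₀)^2*(deriv T x₀)⁻¹*τ^3 + (-1/288:ℝ)*(f x₀)^7*(iteratedDeriv 3 T x₀)^3*(deriv T x₀)⁻¹^2*τ^3 + (-1/32:ℝ)*(f x₀)^4*(deriv f x₀)^2*(iteratedDeriv 2 f x₀)*(iteratedDeriv 3 T x₀)*τ^3 + (-1/96:ℝ)*(f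 x₀)^5*(deriv f x₀)^2*(iteratedDeriv 3 T x₀)^2*(deriv T x₀)⁻¹*τ^3 + (-1/64:ℝ)*(f x₀)^5*(deriv f x₀)*(iteratedDeriv 2 f x₀)^2*(iteratedDeriv 3 T x₀)*τ^4 + (-1/96:ℝ)*(f x₀)^6*(deriv f x₀)*(iteratedDeriv 2 f x₀)*(iteratedDeriv 3 T x₀)^2*(deriv T x₀)⁻¹*τ^4 + (-1/576:ℝ)*(f x₀)^7*(deriv f x₀)*(iteratedDeriv 3 T x₀)^3*(deriv T x₀)⁻¹^2*τ^4 + (-1/384:ℝ)*(f x₀)^6*(iteratedDeriv 2 f x₀)^3*(iteratedDeriv 3 T x₀)*τ^5 + (-1/384:ℝ)*(f x₀)^7*(iteratedDeriv 2 f x₀)^2*(iteratedDeriv 3 T x₀)^2*(deriv T x₀)⁻¹*τ^5 + (-1/1152:ℝ)*(f x₀)^8*(iteratedDeriv 2 f x₀)*(iteratedDeriv 3 T x₀)^3*(deriv T x₀)⁻¹^2*τ^5 + (-1/10368:ℝ)*(f x₀)^9*(iteratedDeriv 3 T x₀)^4*(deriv T x₀)⁻¹^3*τ^5)) := by fun_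prop
      have h := (isBigO_refl (fun τ : ℝ => τ ^ 4) (nhds 0)).mul
        ((hQc.tendsto 0).isBigO_one (F := ℝ))
      exact h.congr_right fun τ => by ring
    have hsum := ((hu1.add hu2).sub hE3).add hu4
    refine hsum.congr_left fun τ => ?_
    rw [key τ]
    ring
  obtain ⟨K, t, ht, hlip⟩ := (hTinv.contDiffAt (n := 1)).exists_lipschitzOnWith
  have hBig : (fun τ : ℝ => Tinv (T x₀ + τ / 2 * (deriv T x₀ * f x₀ + deriv T (x₀ + τ * f x₀) * f (x₀ + τ * f x₀))) - Tinv (T (x₀ + τ * f x₀ + τ ^ 2 / 2 * (deriv f x₀ * f x₀) + τ ^ 3 / 4 * (iteratedDeriv 2 f x₀ * (f x₀) ^ 2 + iteratedDeriv 3 T x₀ / (3 * deriv T x₀) * (f x₀) ^ 3)))) =O[nhds 0]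
      (fun τ : ℝ => (T x₀ + τ / 2 * (deriv T x₀ * f x₀ + deriv T (x₀ + τ * f x₀) * f (x₀ + τ * f x₀))) - T (x₀ + τ * f x₀ + τ ^ 2 / 2 * (deriv f x₀ * f x₀) + τ ^ 3 / 4 * (iteratedDeriv 2 f x₀ * (f x₀) ^ 2 + iteratedDeriv 3 T x₀ / (3 * deriv T x₀) * (f x₀) ^ 3))) := by
    rw [isBigO_iff]
    refine ⟨K, ?_⟩
    filter_upwards [hxi0 ht, hTpf0 ht] with τ h1 h2
    have h3 := hlip.dist_le_mul _ h1 _ h2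
    rw [Real.dist_eq, Real.dist_eq] at h3
    simpa [Real.norm_eq_abs, abs_mul] using h3
  have h1 := hBig.trans hC
  have h2 : ∀ᶠ τ : ℝ in nhds 0, Tinv (T (x₀ + τ * f x₀ + τ ^ 2 / 2 * (deriv f x₀ * f x₀) + τ ^ 3 / 4 * (iteratedDeriv 2 f x₀ * (f x₀) ^ 2 + iteratedDeriv 3 T x₀ / (3 * deriv T x₀) * (f x₀) ^ 3))) = (x₀ + τ * f x₀ + τ ^ 2 / 2 * (deriv f x₀ * f x₀) + τ ^ 3 / 4 * (iteratedDeriv 2 f x₀ * (f x₀) ^ 2 + iteratedDeriv 3 T x₀ / (3 * deriv T x₀) * (f x₀) ^ 3)) := hpf0.eventually hleft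
  refine h1.congr' ?_ EventuallyEq.rfl
  filter_upwards [h2] with τ hτ
  rw [hτ]
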